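/- For every integer n ≥ 1, the following identity holds in ℤ[q,x]: Σ_{π ∈ S_n} q^{lrmin(π)} x^{asc(π)} = Σ_{π ∈ S_n} q^{cyc(π)} x^{exc(π)}, i.e., the pair of statistics (number of left-to-right minima, number of ascents) is jointly equidistributed with (number of cycles, number of excedances) on S_n. -/

import Mathlib

/-!
Both generating polynomials satisfy `P₀ = 1` and
`P_{n+1} = (q + n x) P_n + x (1 - x) ∂P_n/∂x`, i.e.
`q^a x^b ↦ q^(a+1) x^b + b q^a x^b + (n - b) q^a x^(b+1)` on monomials.
Every permutation of `{0, …, n}` arises exactly once by inserting the largest letter `n` into a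
permutation of `{0, …, n-1}` in one of `n + 1` ways.
In the one-line word, `n` put in front creates one new left-to-right minimum, `n` put inside one of
the `asc` ascents keeps the number of ascents, and each of the other `n - asc` places adds one.
In the cycle notation, `n` becomes a new fixed point, or is put right after some `p` in its cycle:
this keeps the number of excedances if `p` was an excedance and adds one for the other `n - exc`
choices of `p`. Cycles are counted by their minima.
-/

open Finset

section Defs

variable {m : ℕ} {α : Type*}

def lrminFilter [LinearOrder α] (f : Fin m → α) : Finset (Fin m) :=
  univ.filter fun i => ∀ j, j < i → f i < f j

def lrminCount [LinearOrder α] (f : Fin m → α) : ℕ :=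
  (lrminFilter f).card

def lrminSet [LinearOrder α] [DecidableEq α] (f : Fin m → α) : Finset α :=
  (lrminFilter f).image f

def ascFilter [LinearOrder α] (f : Fin m → α) : Finset (Fin m) :=
  univ.filter fun i => ∃ j : Fin m, (j : ℕ) + 1 = (i : ℕ) ∧ f j < f i

def ascCount [LinearOrder α] (f : Fin m → α) : ℕ :=
  (ascFilter f).card

def ascSet [LinearOrder α] [DecidableEq α] (f : Fin m → α) : Finset α :=
  (ascFilter f).image f

def apFilter [LinearOrder α] (f : Fin m → α) : Finset (Fin m) :=
  univ.filter fun i =>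
    ∃ j k : Fin m, (j : ℕ) + 1 = (i : ℕ) ∧ (i : ℕ) + 1 = (k : ℕ) ∧ f j < f i ∧ f i = f k

def apCount [LinearOrder α] (f : Fin m → α) : ℕ := (apFilter f).card

def apSet [LinearOrder α] [DecidableEq α] (f : Fin m → α) : Finset α := (apFilter f).image f

def evenFilter [DecidableEq α] (f : Fin m → α) : Finset (Fin m) :=
  univ.filter fun p => (p : ℕ) % 2 = 1 ∧ ∀ q, q < p → f q ≠ f p

def evenCount [DecidableEq α] (f : Fin m → α) : ℕ := (evenFilter f).card

def evenSet [DecidableEq α] (f : Fin m → α) : Finset α := (evenFilter f).image f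

def desrlminCount [LinearOrder α] (f : Fin m → α) : ℕ :=
  (univ.filter fun i : Fin m =>
    (∃ j : Fin m, (j : ℕ) + 1 = (i : ℕ) ∧ f i < f j) ∨ ∀ j, i < j → f i < f j).card

def isLRminPos [LinearOrder α] (f : Fin m → α) (i : Fin m) : Prop :=
  ∀ j, j < i → f i < f j

instance [LinearOrder α] (f : Fin m → α) : DecidablePred (isLRminPos f) := fun i => by
  unfold isLRminPos; infer_instance

def bk2Count [LinearOrder α] (f : Fin m → α) : ℕ :=
  (univ.filter fun i : Fin m =>
    isLRminPos f i ∧ (i : ℕ) + 1 < m ∧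
      (∀ j : Fin m, (j : ℕ) = (i : ℕ) + 1 → ¬ isLRminPos f j) ∧
      (∀ j : Fin m, (j : ℕ) = (i : ℕ) + 2 → isLRminPos f j)).card

end Defs

def IsStirling (n : ℕ) (f : Fin (2 * n) → Fin n) : Prop :=
  (∀ k : Fin n, (univ.filter fun p => f p = k).card = 2) ∧
    ∀ p q r : Fin (2 * n), p < q → q < r → f p = f r → f p < f q

instance (n : ℕ) : DecidablePred (IsStirling n) := fun f => by
  unfold IsStirling; infer_instance

def stirlingFinset (n : ℕ) : Finset (Fin (2 * n) → Fin n) :=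
  univ.filter (IsStirling n)

def markedPerms (n : ℕ) : Finset (Equiv.Perm (Fin n) × Finset (Fin n)) :=
  univ.filter fun pm => ∀ v ∈ pm.2, v ∉ lrminSet (⇑pm.1)

/-- The number of cycles of a permutation, fixed points counting as cycles. -/
def cycCount {n : ℕ} (π : Equiv.Perm (Fin n)) : ℕ :=
  Multiset.card π.cycleType + (univ.filter fun i => π i = i).card

def excCount {n : ℕ} (π : Equiv.Perm (Fin n)) : ℕ :=
  (univ.filter fun i => i < π i).card

open Equiv Equiv.Perm MvPolynomial

lemma Fin.val_succAbove {n : ℕ} (j : Fin (n + 1)) (k : Fin n) :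
    (j.succAbove k : ℕ) = if (k : ℕ) < j then (k : ℕ) else (k : ℕ) + 1 := by
  unfold Fin.succAbove
  split_ifs <;> simp_all [Fin.lt_def, Fin.val_succ]

lemma Fin.card_eq_ite_add_card_succAbove {n : ℕ} (s : Finset (Fin (n + 1))) (j : Fin (n + 1)) :
    #s = (if j ∈ s then 1 else 0) + #{k | j.succAbove k ∈ s} := by
  rw [← Finset.filter_univ_mem s, Finset.card_filter, Finset.card_filter,
    Fin.sum_univ_succAbove _ j]
  simp only [Finset.filter_univ_mem]

lemma Fin.card_filter_castSucc_eq_or_mem {n : ℕ} (E : Finset (Fin n)) (p : Fin (n + 1)) :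
    #{k | k.castSucc = p ∨ k ∈ E} =
      #E + if p = Fin.last n ∨ p ∈ E.map Fin.castSuccEmb then 0 else 1 := by
  induction p using Fin.lastCases with
  | last => simp [Fin.castSucc_ne_last]
  | cast q =>
    have : ({k | k.castSucc = q.castSucc ∨ k ∈ E} : Finset (Fin n)) = insert q E := by
      ext; simp
    rw [this, card_insert_eq_ite]
    split_ifs <;> simp_all

lemma Fin.card_filter_castSucc_ne_and_mem {n : ℕ} (D : Finset (Fin n)) (j : Fin (n + 1)) :
    #{k | k.castSucc ≠ j ∧ k ∈ D} + (if j ∈ D.map Fin.castSuccEmb then 1 else 0) = #D := by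
  induction j using Fin.lastCases with
  | last => simp [Fin.castSucc_ne_last]
  | cast q =>
    have : ({k | k.castSucc ≠ q.castSucc ∧ k ∈ D} : Finset (Fin n)) = D.erase q := by
      ext; simp
    rw [this]
    split_ifs with h
    · exact card_erase_add_one (by simpa using h)
    · simp_all

lemma Fin.sum_ite_eq_ite_mem {M : Type*} [AddCommMonoid M] {n : ℕ} (j₀ : Fin (n + 1))
    (A : Finset (Fin (n + 1))) (hj₀ : j₀ ∉ A) (a b c : M) :
    ∑ j, (if j = j₀ then a else if j ∈ A then b else c) = a + #A • b + (n - #A) • c := by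
  have hA : A ⊆ {j₀}ᶜ := fun j hj => by simpa using ne_of_mem_of_not_mem hj hj₀
  rw [Fintype.sum_eq_add_sum_compl j₀, if_pos rfl, Finset.sum_congr rfl fun j hj =>
    if_neg (Finset.mem_compl.mp hj ∘ Finset.mem_singleton.mpr), Finset.sum_ite,
    Finset.sum_const, Finset.sum_const, Finset.filter_mem_eq_inter, Finset.inter_eq_right.mpr hA,
    Finset.filter_not, Finset.filter_mem_eq_inter, Finset.inter_eq_right.mpr hA,
    Finset.card_sdiff_of_subset hA, Finset.card_compl, Finset.card_singleton, Fintype.card_fin,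
    Nat.add_sub_cancel, add_assoc]

section InsertionOperator

variable {R : Type*} [CommRing R]

noncomputable def insertionOp (n : ℕ) (f : MvPolynomial (Fin 2) R) : MvPolynomial (Fin 2) R :=
  (X 0 + (n : MvPolynomial (Fin 2) R) * X 1) * f + (X 1 - X 1 ^ 2) * pderiv 1 f

lemma insertionOp_sum {ι : Type*} (s : Finset ι) (n : ℕ) (f : ι → MvPolynomial (Fin 2) R) :
    insertionOp n (∑ i ∈ s, f i) = ∑ i ∈ s, insertionOp n (f i) := by
  simp only [insertionOp, map_sum, Finset.mul_sum, Finset.sum_add_distrib]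

lemma X_one_mul_pderiv_one_X_pow_mul_X_pow (a b : ℕ) :
    X 1 * pderiv 1 ((X 0 : MvPolynomial (Fin 2) R) ^ a * X 1 ^ b) =
      (b : MvPolynomial (Fin 2) R) * (X 0 ^ a * X 1 ^ b) := by
  simp only [Derivation.leibniz, Derivation.leibniz_pow, pderiv_X_self,
    pderiv_X_of_ne (by decide : (0 : Fin 2) ≠ 1), smul_eq_mul, nsmul_eq_mul, mul_one]
  cases b with
  | zero => simp
  | succ b => rw [add_tsub_cancel_right]; ring

lemma insertionOp_X_pow_mul_X_pow (n a b : ℕ) :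
    insertionOp n ((X 0 : MvPolynomial (Fin 2) R) ^ a * X 1 ^ b) =
      X 0 ^ a * X 1 ^ b * (X 0 + (b : MvPolynomial (Fin 2) R) +
        ((n : MvPolynomial (Fin 2) R) - (b : MvPolynomial (Fin 2) R)) * X 1) := by
  rw [insertionOp]
  linear_combination (1 - X 1) * X_one_mul_pderiv_one_X_pow_mul_X_pow (R := R) a b

theorem sum_X_pow_eq_insertionOp {β γ : Type*} [Fintype β] [Fintype γ] {n : ℕ}
    {W : Fin (n + 1) × γ → β} (hW : W.Bijective) (u v : β → ℕ) (u' v' : γ → ℕ)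
    (j₀ : γ → Fin (n + 1)) (A : γ → Finset (Fin (n + 1)))
    (hA : ∀ g, #(A g) = v' g) (hj₀ : ∀ g, j₀ g ∉ A g)
    (hu : ∀ j g, u (W (j, g)) = u' g + if j = j₀ g then 1 else 0)
    (hv : ∀ j g, v (W (j, g)) = v' g + if j = j₀ g ∨ j ∈ A g then 0 else 1) :
    ∑ b, (X 0 : MvPolynomial (Fin 2) R) ^ u b * X 1 ^ v b =
      insertionOp n (∑ g, X 0 ^ u' g * X 1 ^ v' g) := by
  rw [← hW.sum_comp, Fintype.sum_prod_type, Finset.sum_comm, insertionOp_sum]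
  refine Finset.sum_congr rfl fun g _ => ?_
  have hterm : ∀ j, (X 0 : MvPolynomial (Fin 2) R) ^ u (W (j, g)) * X 1 ^ v (W (j, g)) =
      X 0 ^ u' g * X 1 ^ v' g * if j = j₀ g then X 0 else if j ∈ A g then 1 else X 1 := by
    intro j
    rw [hu, hv]
    split_ifs <;> first | ring1 | tauto
  have hle : v' g ≤ n := by
    simpa [hA] using Finset.card_lt_univ_of_notMem (hj₀ g)
  rw [Finset.sum_congr rfl fun j _ => hterm j, ← Finset.mul_sum,
    Fin.sum_ite_eq_ite_mem _ _ (hj₀ g), insertionOp_X_pow_mul_X_pow, hA, nsmul_eq_mul,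
    nsmul_eq_mul, mul_one, Nat.cast_sub hle]

end InsertionOperator

section InsertMaxAt

variable {n : ℕ}

-- The word of `g` with the new largest letter `n` inserted at position `j`.
def insertMaxAt (j : Fin (n + 1)) (g : Perm (Fin n)) : Perm (Fin (n + 1)) :=
  (finSuccEquiv' j).trans ((optionCongr g).trans (finSuccEquiv' (Fin.last n)).symm)

variable {j : Fin (n + 1)} {g : Perm (Fin n)}

@[simp] lemma insertMaxAt_self : insertMaxAt j g j = Fin.last n := by
  simp [insertMaxAt]

@[simp] lemma insertMaxAt_succAbove (k : Fin n) :
    insertMaxAt j g (j.succAbove k) = (g k).castSucc := by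
  simp [insertMaxAt]

lemma insertMaxAt_lt_last {i : Fin (n + 1)} (hi : i ≠ j) : insertMaxAt j g i < Fin.last n := by
  obtain ⟨k, rfl⟩ := Fin.exists_succAbove_eq hi
  simp [Fin.castSucc_lt_last]

lemma insertMaxAt_bijective :
    Function.Bijective fun jg : Fin (n + 1) × Perm (Fin n) => insertMaxAt jg.1 jg.2 := by
  refine (Fintype.bijective_iff_injective_and_card _).mpr ⟨fun ⟨j, g⟩ ⟨j', g'⟩ h => ?_, by
    simp [Fintype.card_perm, Nat.factorial_succ]⟩
  have hj : j = j' := by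
    have := congr($h j)
    rw [insertMaxAt_self, ← insertMaxAt_self (j := j') (g := g')] at this
    exact (insertMaxAt j' g').injective this.symm
  subst hj
  rw [Prod.mk.injEq, eq_self, true_and]
  exact Equiv.ext fun k => Fin.castSucc_injective _ (by simpa using congr($h (j.succAbove k)))

lemma self_mem_lrminFilter_insertMaxAt : j ∈ lrminFilter ⇑(insertMaxAt j g) ↔ j = 0 := by
  simp only [lrminFilter, mem_filter, mem_univ, true_and, insertMaxAt_self]
  refine ⟨fun h => ?_, by rintro rfl i hi; exact absurd hi (Fin.not_lt_zero i)⟩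
  by_contra h0
  exact (h 0 (Fin.pos_iff_ne_zero.mpr h0)).not_ge (Fin.le_last _)

lemma succAbove_mem_lrminFilter_insertMaxAt (k : Fin n) :
    j.succAbove k ∈ lrminFilter ⇑(insertMaxAt j g) ↔ k ∈ lrminFilter ⇑g := by
  simp only [lrminFilter, mem_filter, mem_univ, true_and, Fin.forall_iff_succAbove j,
    insertMaxAt_self, insertMaxAt_succAbove, Fin.castSucc_lt_last, implies_true, true_and,
    Fin.succAbove_lt_succAbove_iff, Fin.castSucc_lt_castSucc_iff]

lemma lrminCount_insertMaxAt :
    lrminCount ⇑(insertMaxAt j g) = lrminCount ⇑g + if j = 0 then 1 else 0 := by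
  rw [lrminCount, Fin.card_eq_ite_add_card_succAbove _ j, add_comm]
  simp only [self_mem_lrminFilter_insertMaxAt, succAbove_mem_lrminFilter_insertMaxAt,
    Finset.filter_univ_mem, lrminCount]

lemma self_mem_ascFilter_insertMaxAt : j ∈ ascFilter ⇑(insertMaxAt j g) ↔ j ≠ 0 := by
  simp only [ascFilter, mem_filter, mem_univ, true_and, insertMaxAt_self]
  constructor
  · rintro ⟨i, hi, -⟩ rfl
    simp at hi
  · intro hj
    have hj' : (j : ℕ) ≠ 0 := fun h => hj (Fin.ext h)
    exact ⟨⟨j - 1, by omega⟩, by simp; omega,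
      insertMaxAt_lt_last (Fin.ne_of_val_ne (by simp; omega))⟩

lemma succAbove_mem_ascFilter_insertMaxAt (k : Fin n) :
    j.succAbove k ∈ ascFilter ⇑(insertMaxAt j g) ↔ k.castSucc ≠ j ∧ k ∈ ascFilter ⇑g := by
  simp only [ascFilter, mem_filter, mem_univ, true_and, Fin.exists_iff_succAbove j,
    insertMaxAt_self, insertMaxAt_succAbove, Fin.castSucc_lt_castSucc_iff, Fin.val_succAbove,
    (Fin.le_last _).not_gt, and_false, false_or, ne_eq, Fin.ext_iff, Fin.val_castSucc]
  constructor
  · rintro ⟨k', hk', hlt⟩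
    have : (k : ℕ) ≠ j ∧ (k' : ℕ) + 1 = k := by split_ifs at hk' <;> omega
    exact ⟨this.1, k', this.2, hlt⟩
  · rintro ⟨hkj, k', hk', hlt⟩
    exact ⟨k', by split_ifs <;> omega, hlt⟩

lemma zero_notMem_map_ascFilter (g : Perm (Fin n)) :
    (0 : Fin (n + 1)) ∉ (ascFilter ⇑g).map Fin.castSuccEmb := by
  simp only [ascFilter, mem_map, mem_filter, mem_univ, true_and, Fin.ext_iff]
  rintro ⟨k, ⟨k', hk', -⟩, hk⟩
  simp at hk
  omega

lemma ascCount_insertMaxAt : ascCount ⇑(insertMaxAt j g) =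
    ascCount ⇑g + if j = 0 ∨ j ∈ (ascFilter ⇑g).map Fin.castSuccEmb then 0 else 1 := by
  have hsplit := Fin.card_filter_castSucc_ne_and_mem (ascFilter ⇑g) j
  have hzero := zero_notMem_map_ascFilter g
  rw [ascCount, Fin.card_eq_ite_add_card_succAbove _ j, ascCount]
  simp only [self_mem_ascFilter_insertMaxAt, succAbove_mem_ascFilter_insertMaxAt]
  by_cases hj : j = 0
  · subst hj
    simpa [hzero] using hsplit
  · by_cases hmem : j ∈ (ascFilter ⇑g).map Fin.castSuccEmb <;>
      simp only [hj, hmem, if_true, if_false, or_false, or_true, ne_eq, not_false_eq_true]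
        at hsplit ⊢ <;> omega

end InsertMaxAt

theorem Equiv.Perm.SameCycle.rel_of_forall_apply {α : Type*} {f : Perm α} {r : α → α → Prop}
    (hr : Equivalence r) (hf : ∀ z, r z (f z)) {a b : α} (h : f.SameCycle a b) : r a b := by
  obtain ⟨i, rfl⟩ := h
  induction i using Int.induction_on with
  | zero => exact hr.refl a
  | succ i ih =>
    refine hr.trans ih ?_
    rw [add_comm, zpow_add, zpow_one, Perm.mul_apply]
    exact hf _
  | pred i ih =>
    refine hr.trans ih (hr.symm ?_)
    rw [sub_eq_add_neg, add_comm, zpow_add, zpow_neg_one, Perm.mul_apply]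
    simpa using hf (f⁻¹ ((f ^ (-(i : ℤ))) a))

theorem Equiv.Perm.sameCycle_mul_swap_iff {α : Type*} [DecidableEq α] {f : Perm α} {x y a b : α}
    (hx : f x = x) (ha : a ≠ x) (hb : b ≠ x) :
    (f * swap x y).SameCycle a b ↔ f.SameCycle a b := by
  constructor
  · -- `f * swap x y` is `f` with `x` inserted after `y`; sending `x` to `y` undoes the insertion.
    intro h
    let collapse : α → α := fun z => if z = x then y else z
    have hfx : ∀ {w}, f w = x ↔ w = x := f.injective.eq_iff' hx
    have key : ∀ z, f.SameCycle (collapse z) (collapse ((f * swap x y) z)) := by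
      intro z
      rcases eq_or_ne z x with rfl | hzx
      · by_cases hyz : y = z
        · simp [collapse, hyz, hx, SameCycle.rfl]
        · simp [collapse, hfx, hyz, sameCycle_apply_right, SameCycle.rfl]
      · rcases eq_or_ne z y with rfl | hzy
        · simp [collapse, hx, SameCycle.rfl]
        · simp [collapse, hzx, hzy, swap_apply_of_ne_of_ne, hfx, sameCycle_apply_right,
            SameCycle.rfl]
    simpa [collapse, ha, hb] using
      h.rel_of_forall_apply (r := fun z w => f.SameCycle (collapse z) (collapse w))
        ⟨fun _ => .rfl, .symm, .trans⟩ key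
  · refine SameCycle.rel_of_forall_apply (SameCycle.equivalence _) fun z => ?_
    rcases eq_or_ne z y with rfl | hzy
    · exact ⟨2, by simp [sq, hx]⟩
    rcases eq_or_ne z x with rfl | hzx
    · rw [hx]
    · exact ⟨1, by simp [swap_apply_of_ne_of_ne hzx hzy]⟩

section CycleMins

variable {α : Type*} [Fintype α] [LinearOrder α]

def cycleMins (π : Perm α) : Finset α :=
  {x | ∀ y, π.SameCycle x y → x ≤ y}

lemma mem_cycleMins {π : Perm α} {x : α} :
    x ∈ cycleMins π ↔ ∀ y, π.SameCycle x y → x ≤ y := by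
  simp [cycleMins]

lemma card_cycleMins (π : Perm α) :
    #(cycleMins π) = #π.cycleFactorsFinset + #{x | π x = x} := by
  have hfixed : (cycleMins π).filter (fun x => π x = x) = ({x | π x = x} : Finset α) := by
    ext x
    simp only [mem_filter, mem_univ, true_and, mem_cycleMins, and_iff_right_iff_imp]
    exact fun hx y hy => (hy.eq_of_left hx).le
  have hmoved : #((cycleMins π).filter (fun x => π x ≠ x)) = #π.cycleFactorsFinset := by
    refine Finset.card_bij (fun x _ => π.cycleOf x) (fun x hx => ?_) (fun x hx y hy hxy => ?_)
      (fun c hc => ?_)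
    · simp only [mem_filter] at hx
      exact cycleOf_mem_cycleFactorsFinset_iff.mpr (mem_support.mpr hx.2)
    · simp only [mem_filter, mem_cycleMins] at hx hy
      have hxy : π.SameCycle x y := by
        rw [← mem_support_cycleOf_iff' hx.2, hxy, mem_support_cycleOf_iff' hy.2]
      exact le_antisymm (hx.1 y hxy) (hy.1 x hxy.symm)
    · have hsupp := (mem_cycleFactorsFinset_iff.mp hc).1.nonempty_support
      have hmin := Finset.min'_mem _ hsupp
      have hc_eq := cycle_is_cycleOf hmin hc
      have hπmin := mem_support.mp (mem_cycleFactorsFinset_support_le hc hmin)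
      refine ⟨c.support.min' hsupp, ?_, hc_eq.symm⟩
      simp only [mem_filter, mem_cycleMins]
      refine ⟨fun y hy => c.support.min'_le y ?_, hπmin⟩
      rwa [hc_eq, mem_support_cycleOf_iff' hπmin]
  rw [← hfixed, ← hmoved, add_comm, Finset.card_filter_add_card_filter_not]

lemma cycCount_eq_card_cycleMins {n : ℕ} (π : Perm (Fin n)) : cycCount π = #(cycleMins π) := by
  rw [card_cycleMins, cycCount, cycleType_def, Multiset.card_map]
  rfl

end CycleMins

section InsertMaxAfter

variable {n : ℕ}

def extendLast (τ : Perm (Fin n)) : Perm (Fin (n + 1)) :=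
  τ.extendDomain (finSuccAboveEquiv (Fin.last n))

@[simp] lemma extendLast_castSucc (τ : Perm (Fin n)) (k : Fin n) :
    extendLast τ k.castSucc = (τ k).castSucc := by
  simpa [extendLast, finSuccAboveEquiv_apply] using
    extendDomain_apply_image τ (finSuccAboveEquiv (Fin.last n)) k

@[simp] lemma extendLast_last (τ : Perm (Fin n)) : extendLast τ (Fin.last n) = Fin.last n :=
  extendDomain_apply_not_subtype _ _ (by simp)

lemma sameCycle_extendLast_castSucc {τ : Perm (Fin n)} {a b : Fin n} :
    (extendLast τ).SameCycle a.castSucc b.castSucc ↔ τ.SameCycle a b := by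
  simpa [extendLast, finSuccAboveEquiv_apply] using
    sameCycle_extendDomain (g := τ) (f := finSuccAboveEquiv (Fin.last n)) (x := a) (y := b)

-- Inserts the new largest element `n` right after `p` in its cycle, or as a fixed point if
-- `p = n`.
def insertMaxAfter (p : Fin (n + 1)) (τ : Perm (Fin n)) : Perm (Fin (n + 1)) :=
  extendLast τ * swap (Fin.last n) p

variable {p : Fin (n + 1)} {τ : Perm (Fin n)}

@[simp] lemma insertMaxAfter_self : insertMaxAfter p τ p = Fin.last n := by
  simp [insertMaxAfter]

lemma insertMaxAfter_last : insertMaxAfter (Fin.last n) τ = extendLast τ := by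
  rw [insertMaxAfter, swap_self]
  exact mul_one _

lemma insertMaxAfter_castSucc {k : Fin n} (hk : k.castSucc ≠ p) :
    insertMaxAfter p τ k.castSucc = (τ k).castSucc := by
  rw [insertMaxAfter, Perm.mul_apply, swap_apply_of_ne_of_ne (Fin.castSucc_ne_last k) hk,
    extendLast_castSucc]

lemma insertMaxAfter_bijective :
    Function.Bijective fun pτ : Fin (n + 1) × Perm (Fin n) => insertMaxAfter pτ.1 pτ.2 := by
  refine (Fintype.bijective_iff_injective_and_card _).mpr ⟨fun ⟨p, τ⟩ ⟨p', τ'⟩ h => ?_, by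
    simp [Fintype.card_perm, Nat.factorial_succ]⟩
  have hp : p = p' := by
    have := congr($h p)
    rw [insertMaxAfter_self, ← insertMaxAfter_self (p := p') (τ := τ')] at this
    exact (insertMaxAfter p' τ').injective this.symm
  subst hp
  have hτ : extendLast τ = extendLast τ' := mul_right_cancel h
  rw [Prod.mk.injEq, eq_self, true_and]
  exact Equiv.ext fun k => Fin.castSucc_injective _ (by simpa using congr($hτ k.castSucc))

lemma last_mem_cycleMins_insertMaxAfter :
    Fin.last n ∈ cycleMins (insertMaxAfter p τ) ↔ p = Fin.last n := by
  rw [mem_cycleMins]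
  constructor
  · intro h
    by_contra hp
    have hsc : (insertMaxAfter p τ).SameCycle (Fin.last n) p := SameCycle.symm ⟨1, by simp⟩
    exact hp (le_antisymm (Fin.le_last p) (h p hsc))
  · rintro rfl y hy
    rw [insertMaxAfter_last] at hy
    exact (hy.eq_of_left (extendLast_last τ)).le

lemma castSucc_mem_cycleMins_insertMaxAfter {k : Fin n} :
    k.castSucc ∈ cycleMins (insertMaxAfter p τ) ↔ k ∈ cycleMins τ := by
  have hsc : ∀ b : Fin n,
      (insertMaxAfter p τ).SameCycle k.castSucc b.castSucc ↔ τ.SameCycle k b := fun b => by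
    rw [insertMaxAfter, sameCycle_mul_swap_iff (extendLast_last τ) (Fin.castSucc_ne_last k)
      (Fin.castSucc_ne_last b), sameCycle_extendLast_castSucc]
  simp only [mem_cycleMins, Fin.forall_fin_succ', hsc, Fin.castSucc_le_castSucc_iff,
    Fin.le_last, implies_true, and_true]

lemma cycCount_insertMaxAfter :
    cycCount (insertMaxAfter p τ) = cycCount τ + if p = Fin.last n then 1 else 0 := by
  rw [cycCount_eq_card_cycleMins, cycCount_eq_card_cycleMins,
    Fin.card_eq_ite_add_card_succAbove _ (Fin.last n), add_comm]
  simp only [Fin.succAbove_last, castSucc_mem_cycleMins_insertMaxAfter,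
    last_mem_cycleMins_insertMaxAfter, Finset.filter_univ_mem]

lemma castSucc_lt_insertMaxAfter_iff {k : Fin n} :
    k.castSucc < insertMaxAfter p τ k.castSucc ↔ k.castSucc = p ∨ k < τ k := by
  by_cases hk : k.castSucc = p
  · subst hk
    simp [Fin.castSucc_lt_last]
  · simp [hk, insertMaxAfter_castSucc hk]

lemma excCount_insertMaxAfter : excCount (insertMaxAfter p τ) = excCount τ +
    if p = Fin.last n ∨ p ∈ ({i | i < τ i} : Finset (Fin n)).map Fin.castSuccEmb then 0 else 1 := by
  rw [excCount, Fin.card_eq_ite_add_card_succAbove _ (Fin.last n), excCount,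
    ← Fin.card_filter_castSucc_eq_or_mem]
  simp [castSucc_lt_insertMaxAfter_iff, Fin.le_last]

end InsertMaxAfter

section Equidistribution

variable {R : Type*} [CommRing R]

lemma sum_lrmin_asc_succ (n : ℕ) :
    ∑ σ : Perm (Fin (n + 1)), (X 0 : MvPolynomial (Fin 2) R) ^ lrminCount ⇑σ * X 1 ^ ascCount ⇑σ =
      insertionOp n (∑ g : Perm (Fin n), X 0 ^ lrminCount ⇑g * X 1 ^ ascCount ⇑g) :=
  sum_X_pow_eq_insertionOp insertMaxAt_bijective _ _ _ _ (fun _ => 0)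
    (fun g => (ascFilter ⇑g).map Fin.castSuccEmb) (fun _ => card_map _) zero_notMem_map_ascFilter
    (fun _ _ => lrminCount_insertMaxAt) (fun _ _ => ascCount_insertMaxAt)

lemma sum_cyc_exc_succ (n : ℕ) :
    ∑ σ : Perm (Fin (n + 1)), (X 0 : MvPolynomial (Fin 2) R) ^ cycCount σ * X 1 ^ excCount σ =
      insertionOp n (∑ τ : Perm (Fin n), X 0 ^ cycCount τ * X 1 ^ excCount τ) :=
  sum_X_pow_eq_insertionOp insertMaxAfter_bijective _ _ _ _ (fun _ => Fin.last n)
    (fun τ => ({i | i < τ i} : Finset (Fin n)).map Fin.castSuccEmb) (fun _ => card_map _)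
    (fun _ => by simp [Fin.castSucc_ne_last]) (fun _ _ => cycCount_insertMaxAfter)
    (fun _ _ => excCount_insertMaxAfter)

end Equidistribution

theorem stmt_17_general (n : ℕ) :
    ∑ π : Equiv.Perm (Fin n),
        (MvPolynomial.X 0 : MvPolynomial (Fin 2) ℤ) ^ lrminCount ⇑π *
          MvPolynomial.X 1 ^ ascCount ⇑π
      = ∑ π : Equiv.Perm (Fin n),
          (MvPolynomial.X 0 : MvPolynomial (Fin 2) ℤ) ^ cycCount π *
            MvPolynomial.X 1 ^ excCount π := by
  induction n with
  | zero => simp [lrminCount, lrminFilter, ascCount, ascFilter, cycCount, excCount]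
  | succ n ih => rw [sum_lrmin_asc_succ, sum_cyc_exc_succ, ih]

/-- (lrmin, asc) is jointly equidistributed with (cyc, exc) on S_n,
as an identity in ℤ[q,x] (variables X 0 = q, X 1 = x). -/
theorem stmt_17 (n : ℕ) (hn : 1 ≤ n) :
    ∑ π : Equiv.Perm (Fin n),
        (MvPolynomial.X 0 : MvPolynomial (Fin 2) ℤ) ^ lrminCount ⇑π *
          MvPolynomial.X 1 ^ ascCount ⇑π
      = ∑ π : Equiv.Perm (Fin n),
          (MvPolynomial.X 0 : MvPolynomial (Fin 2) ℤ) ^ cycCount π *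
            MvPolynomial.X 1 ^ excCount π :=
  stmt_17_general n
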